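/- Suppose δ_n ≥ 2·α·m·‖C_n − C∞‖. Then the optimal value f*_n of rLogSpecT satisfies α·m·(1 − log α) ≤ f*_n ≤ f*, where f* is the optimal value of LogSpecT. -/

import Mathlib

/-!
Each row contributes `g(r) = r - α log r ≥ α (1 - log α)` to the objective (with `r` the row sum),
which gives the lower bound for any matrix with positive row sums.

For the upper bound, the LogSpecT constraint is invariant under scaling, so `t ↦ f(t S*)` is
minimised at `t = 1`; since `f(t S*) = f(S*) + (t - 1)‖S*‖_{1,1} - α m log t`, this forces
`‖S*‖_{1,1} = α m`. Writing `D = C_n - C∞` and using `S* C∞ = C∞ S*`,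
`‖C_n S* - S* C_n‖_F = ‖D S* - S* D‖_F ≤ 2 ‖D‖ ‖S*‖_F ≤ 2 ‖D‖ ‖S*‖_{1,1} = 2 α m ‖D‖ ≤ δ_n`,
so `S*` is feasible for rLogSpecT and `f*_n ≤ f(S*) = f*`.
-/

/-- Valid adjacency matrices: symmetric, hollow, nonnegative. -/
def validAdj {m : ℕ} (S : Matrix (Fin m) (Fin m) ℝ) : Prop :=
  S.IsSymm ∧ (∀ i, S i i = 0) ∧ ∀ i j, 0 ≤ S i j

/-- Euclidean norm of a vector. -/
noncomputable def enorm' {k : ℕ} (x : Fin k → ℝ) : ℝ :=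
  Real.sqrt (∑ i, (x i) ^ 2)

/-- Frobenius norm of a matrix. -/
noncomputable def frob {m : ℕ} (X : Matrix (Fin m) (Fin m) ℝ) : ℝ :=
  Real.sqrt (∑ i, ∑ j, (X i j) ^ 2)

/-- Operator (spectral) norm induced by the Euclidean vector norm. -/
noncomputable def opNorm {m : ℕ} (Y : Matrix (Fin m) (Fin m) ℝ) : ℝ :=
  sSup {c : ℝ | ∃ x : Fin m → ℝ, enorm' x ≤ 1 ∧ c = enorm' (Y.mulVec x)}

/-- LogSpecT objective ‖S‖_{1,1} − α·1ᵀ log(S1). -/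
noncomputable def obj {m : ℕ} (α : ℝ) (S : Matrix (Fin m) (Fin m) ℝ) : ℝ :=
  (∑ i, ∑ j, |S i j|) - α * ∑ i, Real.log (∑ j, S i j)

open Finset Matrix

section Norms

variable {m : ℕ}

lemma enorm'_eq_norm {k : ℕ} (x : Fin k → ℝ) :
    enorm' x = ‖(WithLp.toLp 2 x : EuclideanSpace ℝ (Fin k))‖ := by
  simp [enorm', EuclideanSpace.norm_eq]

lemma opNorm_eq_norm_toEuclideanCLM (Y : Matrix (Fin m) (Fin m) ℝ) :
    opNorm Y = ‖toEuclideanCLM (𝕜 := ℝ) Y‖ := by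
  rw [← ContinuousLinearMap.sSup_unitClosedBall_eq_norm, opNorm]
  congr 1
  ext c
  constructor
  · rintro ⟨x, hx, rfl⟩
    exact ⟨WithLp.toLp 2 x, by simpa [enorm'_eq_norm] using hx, by simp [enorm'_eq_norm]⟩
  · rintro ⟨x, hx, rfl⟩
    exact ⟨x.ofLp, by simpa [enorm'_eq_norm] using hx,
      by simp [enorm'_eq_norm, ← toEuclideanCLM_toLp]⟩

lemma opNorm_nonneg (Y : Matrix (Fin m) (Fin m) ℝ) : 0 ≤ opNorm Y := by
  rw [opNorm_eq_norm_toEuclideanCLM]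
  exact norm_nonneg _

open scoped Matrix.Norms.L2Operator in
lemma opNorm_transpose (Y : Matrix (Fin m) (Fin m) ℝ) : opNorm Yᵀ = opNorm Y := by
  simpa [opNorm_eq_norm_toEuclideanCLM, l2_opNorm_toEuclideanCLM] using l2_opNorm_conjTranspose Y

lemma enorm'_mulVec_le (Y : Matrix (Fin m) (Fin m) ℝ) (x : Fin m → ℝ) :
    enorm' (Y *ᵥ x) ≤ opNorm Y * enorm' x := by
  simpa [enorm'_eq_norm, opNorm_eq_norm_toEuclideanCLM] using
    (toEuclideanCLM (𝕜 := ℝ) Y).le_opNorm (WithLp.toLp 2 x)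

lemma frob_eq_sqrt_sum_enorm'_sq (X : Matrix (Fin m) (Fin m) ℝ) :
    frob X = √(∑ i, enorm' (X i) ^ 2) := by
  simp [frob, enorm', Real.sq_sqrt, Finset.sum_nonneg, sq_nonneg]

section Frobenius

attribute [local instance] Matrix.frobeniusNormedAddCommGroup

lemma frob_eq_norm (X : Matrix (Fin m) (Fin m) ℝ) : frob X = ‖X‖ := by
  simp [frob, frobenius_norm_def, Real.sqrt_eq_rpow]

lemma frob_sub_le (X Y : Matrix (Fin m) (Fin m) ℝ) : frob (X - Y) ≤ frob X + frob Y := by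
  simpa only [frob_eq_norm] using norm_sub_le (E := Matrix (Fin m) (Fin m) ℝ) X Y

lemma frob_transpose (X : Matrix (Fin m) (Fin m) ℝ) : frob Xᵀ = frob X := by
  simp only [frob_eq_norm]
  exact frobenius_norm_transpose X

end Frobenius

lemma frob_le_sum_abs (X : Matrix (Fin m) (Fin m) ℝ) : frob X ≤ ∑ i, ∑ j, |X i j| := by
  rw [frob, Real.sqrt_le_left (by positivity)]
  calc ∑ i, ∑ j, X i j ^ 2 = ∑ i, ∑ j, |X i j| ^ 2 := by simp only [sq_abs]
    _ ≤ ∑ i, (∑ j, |X i j|) ^ 2 :=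
      sum_le_sum fun i _ => sum_sq_le_sq_sum_of_nonneg fun j _ => abs_nonneg _
    _ ≤ (∑ i, ∑ j, |X i j|) ^ 2 :=
      sum_sq_le_sq_sum_of_nonneg fun i _ => sum_nonneg fun j _ => abs_nonneg _

lemma frob_mul_transpose_le (A B : Matrix (Fin m) (Fin m) ℝ) :
    frob (B * Aᵀ) ≤ opNorm A * frob B := by
  have hrow : ∀ i, (B * Aᵀ) i = A *ᵥ B i := fun i => by
    ext j
    simp [mul_apply, mulVec, dotProduct, mul_comm]
  rw [frob_eq_sqrt_sum_enorm'_sq, frob_eq_sqrt_sum_enorm'_sq, ← Real.sqrt_sq (opNorm_nonneg A),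
    ← Real.sqrt_mul (sq_nonneg _), mul_sum]
  gcongr with i
  rw [hrow, ← mul_pow]
  exact pow_le_pow_left₀ (Real.sqrt_nonneg _) (enorm'_mulVec_le A (B i)) 2

lemma frob_mul_le_opNorm_left (A B : Matrix (Fin m) (Fin m) ℝ) :
    frob (A * B) ≤ opNorm A * frob B := by
  simpa [← frob_transpose (A * B), frob_transpose B] using frob_mul_transpose_le A Bᵀ

lemma frob_mul_le_opNorm_right (A B : Matrix (Fin m) (Fin m) ℝ) :
    frob (B * A) ≤ opNorm A * frob B := by
  simpa [opNorm_transpose] using frob_mul_transpose_le Aᵀ B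

lemma frob_commutator_le (A S : Matrix (Fin m) (Fin m) ℝ) :
    frob (A * S - S * A) ≤ 2 * opNorm A * frob S := by
  linarith [frob_sub_le (A * S) (S * A), frob_mul_le_opNorm_left A S,
    frob_mul_le_opNorm_right A S]

end Norms

lemma sub_mul_log_le_sub_mul_log {α r : ℝ} (hα : 0 < α) (hr : 0 < r) :
    α - α * Real.log α ≤ r - α * Real.log r := by
  have h := Real.log_le_sub_one_of_pos (div_pos hr hα)
  rw [Real.log_div hr.ne' hα.ne'] at h
  have e : α * (r / α - 1) = r - α := by field_simp
  nlinarith [mul_le_mul_of_nonneg_left h hα.le]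

-- `t = a / s` minimises `t ↦ (t - 1) * s - a * log t`.
lemma eq_of_forall_mul_log_le {a s : ℝ} (ha : 0 < a) (hs : 0 < s)
    (h : ∀ t, 0 < t → a * Real.log t ≤ (t - 1) * s) : s = a := by
  by_contra hne
  have hlt : Real.log (s / a) < s / a - 1 :=
    Real.log_lt_sub_one_of_pos (div_pos hs ha) (by rwa [Ne, div_eq_one_iff_eq ha.ne'])
  have hmin := h (a / s) (div_pos ha hs)
  rw [← inv_div, Real.log_inv] at hmin
  have e1 : (s / a)⁻¹ * s = a := by field_simp
  have e2 : a * (s / a - 1) = s - a := by field_simp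
  nlinarith [mul_lt_mul_of_pos_left hlt ha]

section LogSpecT

variable {m : ℕ} {α : ℝ}

lemma validAdj.smul {S : Matrix (Fin m) (Fin m) ℝ} (hS : validAdj S) {t : ℝ} (ht : 0 ≤ t) :
    validAdj (t • S) := by
  obtain ⟨hsymm, hdiag, hnonneg⟩ := hS
  exact ⟨hsymm.smul t, fun i => by simp [hdiag i], fun i j => smul_nonneg ht (hnonneg i j)⟩

lemma row_sum_smul (t : ℝ) (S : Matrix (Fin m) (Fin m) ℝ) (i : Fin m) :
    ∑ j, (t • S) i j = t * ∑ j, S i j := by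
  simp [mul_sum]

lemma mul_one_sub_log_le_obj (hα : 0 < α) {S : Matrix (Fin m) (Fin m) ℝ}
    (hS : ∀ i, 0 < ∑ j, S i j) : α * m * (1 - Real.log α) ≤ obj α S :=
  calc α * m * (1 - Real.log α) = ∑ _i : Fin m, (α - α * Real.log α) := by
        simp only [sum_const, card_univ, Fintype.card_fin, nsmul_eq_mul]
        ring
    _ ≤ ∑ i, ((∑ j, S i j) - α * Real.log (∑ j, S i j)) :=
      sum_le_sum fun i _ => sub_mul_log_le_sub_mul_log hα (hS i)
    _ ≤ obj α S := by
      rw [obj, sum_sub_distrib, ← mul_sum]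
      gcongr
      exact le_abs_self _

lemma obj_smul {S : Matrix (Fin m) (Fin m) ℝ} (hS : ∀ i, ∑ j, S i j ≠ 0) {t : ℝ} (ht : 0 < t) :
    obj α (t • S) = obj α S + (t - 1) * ∑ i, ∑ j, |S i j| - α * m * Real.log t := by
  have habs : ∑ i, ∑ j, |(t • S) i j| = t * ∑ i, ∑ j, |S i j| := by
    simp [abs_mul, abs_of_pos ht, mul_sum]
  have hlog : ∑ i, Real.log (∑ j, (t • S) i j) = m * Real.log t + ∑ i, Real.log (∑ j, S i j) := by
    simp only [row_sum_smul, Real.log_mul ht.ne' (hS _), sum_add_distrib, sum_const, card_univ,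
      Fintype.card_fin, nsmul_eq_mul]
  rw [obj, obj, habs, hlog]
  ring

lemma sum_abs_eq_of_le_obj_smul (hα : 0 < α) {S : Matrix (Fin m) (Fin m) ℝ}
    (hS : ∀ i, 0 < ∑ j, S i j) (hmin : ∀ t : ℝ, 0 < t → obj α S ≤ obj α (t • S)) :
    ∑ i, ∑ j, |S i j| = α * m := by
  rcases Nat.eq_zero_or_pos m with rfl | hm
  · simp
  refine eq_of_forall_mul_log_le (by positivity) ?_ fun t ht => ?_
  · exact sum_pos (fun i _ => (hS i).trans_le (sum_le_sum fun j _ => le_abs_self _))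
      ⟨⟨0, hm⟩, mem_univ _⟩
  · have := hmin t ht
    rw [obj_smul (fun i => (hS i).ne') ht] at this
    linarith

end LogSpecT

theorem stmt_15_general (m : ℕ) (α δn : ℝ) (hα : 0 < α)
    (Cn Cinf : Matrix (Fin m) (Fin m) ℝ)
    (hδn : 2 * α * m * opNorm (Cn - Cinf) ≤ δn)
    -- S* is an optimal solution of LogSpecT
    (Sstar : Matrix (Fin m) (Fin m) ℝ)
    (hfeas : validAdj Sstar ∧ Sstar * Cinf = Cinf * Sstar)
    (hpos : ∀ i, 0 < ∑ j, Sstar i j)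
    (hopt : ∀ T, validAdj T → T * Cinf = Cinf * T → (∀ i, 0 < ∑ j, T i j) →
      obj α Sstar ≤ obj α T)
    -- S*_n is an optimal solution of rLogSpecT with parameter δ_n
    (Sn : Matrix (Fin m) (Fin m) ℝ)
    (hposn : ∀ i, 0 < ∑ j, Sn i j)
    (hoptn : ∀ T, validAdj T → frob (Cn * T - T * Cn) ≤ δn →
      (∀ i, 0 < ∑ j, T i j) → obj α Sn ≤ obj α T) :
    α * m * (1 - Real.log α) ≤ obj α Sn ∧ obj α Sn ≤ obj α Sstar := by
  obtain ⟨hvalid, hcomm⟩ := hfeas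
  refine ⟨mul_one_sub_log_le_obj hα hposn, hoptn Sstar hvalid ?_ hpos⟩
  have hmass : ∑ i, ∑ j, |Sstar i j| = α * m :=
    sum_abs_eq_of_le_obj_smul hα hpos fun t ht =>
      hopt _ (hvalid.smul ht.le) (by rw [Matrix.smul_mul, Matrix.mul_smul, hcomm])
        fun i => (row_sum_smul t Sstar i).symm ▸ mul_pos ht (hpos i)
  calc frob (Cn * Sstar - Sstar * Cn)
      = frob ((Cn - Cinf) * Sstar - Sstar * (Cn - Cinf)) := by
        rw [sub_mul, mul_sub, hcomm]; abel_nf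
    _ ≤ 2 * opNorm (Cn - Cinf) * frob Sstar := frob_commutator_le _ _
    _ ≤ 2 * opNorm (Cn - Cinf) * (α * m) := by
        have := opNorm_nonneg (Cn - Cinf)
        gcongr
        exact hmass ▸ frob_le_sum_abs Sstar
    _ = 2 * α * m * opNorm (Cn - Cinf) := by ring
    _ ≤ δn := hδn

/-- If δ_n ≥ 2αm‖C_n − C∞‖ then the optimal value f*_n of rLogSpecT satisfies
α·m·(1 − log α) ≤ f*_n ≤ f*, where f* is the optimal value of LogSpecT. -/
theorem stmt_15 (m : ℕ) (α δn : ℝ) (hα : 0 < α)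
    (Cn Cinf : Matrix (Fin m) (Fin m) ℝ) (hCn : Cn.IsSymm) (hCinf : Cinf.IsSymm)
    (hδn : 2 * α * m * opNorm (Cn - Cinf) ≤ δn)
    -- S* is an optimal solution of LogSpecT
    (Sstar : Matrix (Fin m) (Fin m) ℝ)
    (hfeas : validAdj Sstar ∧ Sstar * Cinf = Cinf * Sstar)
    (hpos : ∀ i, 0 < ∑ j, Sstar i j)
    (hopt : ∀ T, validAdj T → T * Cinf = Cinf * T → (∀ i, 0 < ∑ j, T i j) →
      obj α Sstar ≤ obj α T)
    -- S*_n is an optimal solution of rLogSpecT with parameter δ_n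
    (Sn : Matrix (Fin m) (Fin m) ℝ)
    (hfeasn : validAdj Sn ∧ frob (Cn * Sn - Sn * Cn) ≤ δn)
    (hposn : ∀ i, 0 < ∑ j, Sn i j)
    (hoptn : ∀ T, validAdj T → frob (Cn * T - T * Cn) ≤ δn →
      (∀ i, 0 < ∑ j, T i j) → obj α Sn ≤ obj α T) :
    α * m * (1 - Real.log α) ≤ obj α Sn ∧ obj α Sn ≤ obj α Sstar :=
  stmt_15_general m α δn hα Cn Cinf hδn Sstar hfeas hpos hopt Sn hposn hoptn
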